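/- arXiv:1706.10285 — 5 statements merged into one kernel-verified Lean document; each statement's English description precedes it below -/
import Mathlib

section
/- Let x be a random variable with chi-squared distribution with n > 2 degrees of freedom, and let c > 0. Then P(x > n - 2 + 2*sqrt(c(n-2) ln n)) ≤ α n^{-c}, where α = (1/sqrt(π(n-2)) + 1/(2 sqrt(cπ ln n))) · exp((4/3) sqrt(c^3 ln^3 n / (n-2))). -/
/-!
Write `m = n - 2`, so that the χ²(m + 2) density is proportional to `f x = x^{m/2} e^{-x/2}`.
Since `log f` is concave, beyond the threshold `a = m + t` the density is dominated by its value
at `a` times `exp(-(t / 2a)(x - a))`, so the tail is at most `f a · 2a / t`. The bound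
`log (1 + u) ≤ u - u²/2 + u³/3` compares `f a` with the value at the mode `m` up to the factor
`exp(-t²/(4m) + t³/(6m²))`, and the value at the mode is at most `1 / (2√(πm))` by Stirling's
lower bound `√(2πx) (x/e)^x ≤ Γ(x + 1)` for real `x > 0`. The choice `t = 2√(c m ln n)`
turns `exp(-t²/(4m))` into `n^{-c}`.

Stirling's bound for real `x` comes from the integer case: the remainder
`log Γ(x + 1) - (x + 1/2) log x + x` decreases along unit steps, and log-convexity of `Γ`
controls it between consecutive integers.
-/

open Real Set Filter Topology MeasureTheory

namespace Real

lemma log_one_add_le_cubic {u : ℝ} (hu : 0 ≤ u) :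
    log (1 + u) ≤ u - u ^ 2 / 2 + u ^ 3 / 3 := by
  let F : ℝ → ℝ := fun v => v - v ^ 2 / 2 + v ^ 3 / 3 - log (1 + v)
  have hF : ∀ v ∈ Ici (0 : ℝ), HasDerivAt F (v ^ 3 / (1 + v)) v := by
    intro v hv
    have hv1 : 1 + v ≠ 0 := by have : (0 : ℝ) ≤ v := hv; positivity
    refine ((((hasDerivAt_id v).sub ((hasDerivAt_pow 2 v).div_const 2)).add
      ((hasDerivAt_pow 3 v).div_const 3)).sub
        (((hasDerivAt_id v).const_add 1).log hv1)).congr_deriv ?_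
    simp only [id]
    field_simp
    ring
  have hmono : MonotoneOn F (Ici 0) :=
    monotoneOn_of_hasDerivWithinAt_nonneg (convex_Ici 0)
      (fun v hv => (hF v hv).continuousAt.continuousWithinAt)
      (fun v hv => (hF v (interior_subset hv)).hasDerivWithinAt)
      (fun v hv => by have : (0 : ℝ) ≤ v := interior_subset hv; positivity)
  simpa [F] using hmono self_mem_Ici hu hu

noncomputable def stirlingRemainder (x : ℝ) : ℝ :=
  log (Gamma (x + 1)) - ((x + 1 / 2) * log x - x)

lemma stirlingRemainder_add_one_le {x : ℝ} (hx : 0 < x) :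
    stirlingRemainder (x + 1) ≤ stirlingRemainder x := by
  have hlog : log (x + 1) = log x + log (1 + x⁻¹) := by
    rw [← log_mul hx.ne' (by positivity)]
    congr 1
    field_simp
  have hkey : 1 ≤ (x + 1 / 2) * log (1 + x⁻¹) := by
    have h := (lt_log_one_add_of_pos (inv_pos.2 hx)).le
    rw [show 2 * x⁻¹ / (x⁻¹ + 2) = (x + 1 / 2)⁻¹ by field_simp; ring,
      inv_le_iff_one_le_mul₀' (by positivity)] at h
    exact h
  simp only [stirlingRemainder]
  rw [Gamma_add_one (by positivity),
    log_mul (by positivity) (Gamma_pos_of_pos (by positivity)).ne', hlog]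
  nlinarith

lemma stirlingRemainder_add_nat_le {x : ℝ} (hx : 0 < x) (k : ℕ) :
    stirlingRemainder (x + k) ≤ stirlingRemainder x := by
  induction k with
  | zero => simp
  | succ k ih =>
    calc stirlingRemainder (x + (k + 1 : ℕ)) = stirlingRemainder (x + k + 1) := by
          push_cast; ring_nf
      _ ≤ stirlingRemainder (x + k) := stirlingRemainder_add_one_le (by positivity)
      _ ≤ stirlingRemainder x := ih

lemma log_two_pi_div_two_sub_le_stirlingRemainder_nat_add {N : ℕ} (hN : N ≠ 0) {s : ℝ}
    (hs₀ : 0 < s) (hs₁ : s ≤ 1) :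
    log (2 * π) / 2 - 2 / N ≤ stirlingRemainder (N + s) := by
  have hN₀ : (0 : ℝ) < N := by positivity
  have hconv : log (N.factorial) + s * log N ≤ log (Gamma (N + 1 + s)) := by
    have := BohrMollerup.f_add_nat_ge convexOn_log_Gamma
      (fun {y} hy => by
        rw [Function.comp_apply, Function.comp_apply, Gamma_add_one hy.ne',
          log_mul hy.ne' (Gamma_pos_of_pos hy).ne', add_comm])
      (n := N + 1) (by omega) hs₀
    simpa [Gamma_nat_eq_factorial] using this
  have hfact := Stirling.le_log_factorial_stirling hN
  have hlog : log (N + s) - log N ≤ s / N := by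
    rw [← log_div (by positivity) hN₀.ne']
    linarith [log_le_sub_one_of_pos (show 0 < (N + s) / N by positivity),
      show (N + s) / N - 1 = s / N by field_simp; ring]
  have hprod : (N + s + 1 / 2) * (log (N + s) - log N) ≤ s + 2 / N := by
    calc (N + s + 1 / 2) * (log (N + s) - log N) ≤ (N + s + 1 / 2) * (s / N) := by gcongr
      _ = s + s * (s + 1 / 2) / N := by field_simp; ring
      _ ≤ s + 2 / N := by gcongr; nlinarith
  simp only [stirlingRemainder]
  rw [show (N : ℝ) + s + 1 = N + 1 + s by ring]
  nlinarith

lemma log_two_pi_div_two_le_stirlingRemainder {x : ℝ} (hx : 0 < x) :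
    log (2 * π) / 2 ≤ stirlingRemainder x := by
  set N := ⌈x⌉₊
  have hN : N ≠ 0 := (Nat.ceil_pos.2 hx).ne'
  have hs₀ : 0 < x + 1 - N := by linarith [Nat.ceil_lt_add_one hx.le]
  have hs₁ : x + 1 - N ≤ 1 := by linarith [Nat.le_ceil x]
  have hbound (k : ℕ) : log (2 * π) / 2 - 2 / ((k + N : ℕ) : ℝ) ≤ stirlingRemainder x := by
    calc log (2 * π) / 2 - 2 / ((k + N : ℕ) : ℝ)
        ≤ stirlingRemainder ((k + N : ℕ) + (x + 1 - N)) :=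
          log_two_pi_div_two_sub_le_stirlingRemainder_nat_add (by omega) hs₀ hs₁
      _ = stirlingRemainder (x + (k + 1 : ℕ)) := by push_cast; ring_nf
      _ ≤ stirlingRemainder x := stirlingRemainder_add_nat_le hx _
  have hlim : Tendsto (fun k : ℕ => log (2 * π) / 2 - 2 / ((k + N : ℕ) : ℝ)) atTop
      (𝓝 (log (2 * π) / 2)) := by
    simpa using tendsto_const_nhds.sub
      ((tendsto_add_atTop_iff_nat N).2 (tendsto_const_div_atTop_nhds_zero_nat (2 : ℝ)))
  exact le_of_tendsto' hlim hbound

theorem le_Gamma_add_one_stirling {x : ℝ} (hx : 0 < x) :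
    √(2 * π * x) * (x / exp 1) ^ x ≤ Gamma (x + 1) := by
  have hΓ : 0 < Gamma (x + 1) := Gamma_pos_of_pos (by positivity)
  rw [← log_le_log_iff (by positivity) hΓ, log_mul (by positivity) (by positivity), log_sqrt
    (by positivity), log_rpow (by positivity), log_div hx.ne' (exp_pos 1).ne', log_exp,
    log_mul (by positivity) hx.ne']
  have := log_two_pi_div_two_le_stirlingRemainder hx
  simp only [stirlingRemainder] at this
  linarith

end Real

lemma rpow_mul_exp_neg_half_le {a x p : ℝ} (ha : 0 < a) (hax : a ≤ x) (hp : 0 ≤ p) :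
    x ^ p * exp (-x / 2) ≤ a ^ p * exp (-a / 2) * exp (-((1 / 2 - p / a) * (x - a))) := by
  have hxa : 0 ≤ x / a := div_nonneg (ha.le.trans hax) ha.le
  have hratio : (x / a) ^ p ≤ exp ((x / a - 1) * p) := by
    rw [exp_mul]
    gcongr
    linarith [add_one_le_exp (x / a - 1)]
  calc x ^ p * exp (-x / 2) = a ^ p * (x / a) ^ p * exp (-x / 2) := by
        rw [← mul_rpow ha.le hxa, mul_div_cancel₀ _ ha.ne']
    _ ≤ a ^ p * exp ((x / a - 1) * p) * exp (-x / 2) := by gcongr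
    _ = a ^ p * exp (-a / 2) * exp (-((1 / 2 - p / a) * (x - a))) := by
        rw [mul_assoc, mul_assoc, ← exp_add, ← exp_add]
        congr 2
        field_simp
        ring

lemma lintegral_Ioi_le_of_le_mul_exp {f : ℝ → ℝ} {a C r : ℝ} (hC : 0 ≤ C) (hr : 0 < r)
    (hf : ∀ x ∈ Ioi a, f x ≤ C * exp (-(r * (x - a)))) :
    ∫⁻ x in Ioi a, ENNReal.ofReal (f x) ≤ ENNReal.ofReal (C / r) := by
  have hexp : (fun x => C * exp (-(r * (x - a)))) = fun x => C * exp (r * a) * exp (-r * x) := by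
    ext x
    rw [mul_assoc, ← exp_add]
    ring_nf
  have hint : IntegrableOn (fun x => C * exp (-(r * (x - a)))) (Ioi a) := by
    rw [hexp]
    exact (integrableOn_exp_mul_Ioi (neg_lt_zero.2 hr) a).const_mul _
  have hval : ∫ x in Ioi a, C * exp (-(r * (x - a))) = C / r := by
    rw [hexp, integral_const_mul, integral_exp_mul_Ioi (neg_lt_zero.2 hr), neg_div_neg_eq,
      mul_div_assoc', mul_assoc, ← exp_add]
    simp
  calc ∫⁻ x in Ioi a, ENNReal.ofReal (f x)
      ≤ ∫⁻ x in Ioi a, ENNReal.ofReal (C * exp (-(r * (x - a)))) :=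
        setLIntegral_mono (by fun_prop) fun x hx => ENNReal.ofReal_le_ofReal (hf x hx)
    _ = ENNReal.ofReal (C / r) := by
        rw [← hval, ofReal_integral_eq_lintegral_ofReal hint (ae_of_all _ fun x => by positivity)]

namespace ProbabilityTheory

noncomputable def chiSqPDFReal (k x : ℝ) : ℝ :=
  if 0 < x then x ^ (k / 2 - 1) * exp (-x / 2) / (2 ^ (k / 2) * Gamma (k / 2)) else 0

lemma chiSqPDFReal_add_two_of_pos {m x : ℝ} (hx : 0 < x) :
    chiSqPDFReal (m + 2) x =
      x ^ (m / 2) * exp (-x / 2) / (2 ^ (m / 2 + 1) * Gamma (m / 2 + 1)) := by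
  rw [chiSqPDFReal, if_pos hx, show (m + 2) / 2 = m / 2 + 1 by ring, add_sub_cancel_right]

lemma chiSqPDFReal_add_two_le_mul_exp {m a x : ℝ} (hm : 0 ≤ m) (ha : 0 < a) (hax : a ≤ x) :
    chiSqPDFReal (m + 2) x ≤
      chiSqPDFReal (m + 2) a * exp (-((1 / 2 - m / 2 / a) * (x - a))) := by
  rw [chiSqPDFReal_add_two_of_pos (ha.trans_le hax), chiSqPDFReal_add_two_of_pos ha,
    div_mul_eq_mul_div]
  gcongr ?_ / _
  exact rpow_mul_exp_neg_half_le ha hax (by positivity)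

lemma chiSqPDFReal_add_two_add_le {m t : ℝ} (hm : 0 < m) (ht : 0 ≤ t) :
    chiSqPDFReal (m + 2) (m + t) ≤
      chiSqPDFReal (m + 2) m * exp (-(t ^ 2 / (4 * m)) + t ^ 3 / (6 * m ^ 2)) := by
  have hpow : (m + t) ^ (m / 2) ≤
      m ^ (m / 2) * exp ((t / m - (t / m) ^ 2 / 2 + (t / m) ^ 3 / 3) * (m / 2)) := by
    rw [show m + t = m * (1 + t / m) by field_simp, mul_rpow hm.le (by positivity),
      rpow_def_of_pos (show 0 < 1 + t / m by positivity)]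
    gcongr
    exact log_one_add_le_cubic (by positivity)
  rw [chiSqPDFReal_add_two_of_pos (by positivity), chiSqPDFReal_add_two_of_pos hm,
    div_mul_eq_mul_div]
  gcongr ?_ / _
  calc (m + t) ^ (m / 2) * exp (-(m + t) / 2)
      ≤ m ^ (m / 2) * exp ((t / m - (t / m) ^ 2 / 2 + (t / m) ^ 3 / 3) * (m / 2)) *
          exp (-(m + t) / 2) := by gcongr
    _ = m ^ (m / 2) * exp (-m / 2) * exp (-(t ^ 2 / (4 * m)) + t ^ 3 / (6 * m ^ 2)) := by
        rw [mul_assoc, mul_assoc, ← exp_add, ← exp_add]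
        congr 2
        field_simp
        ring

lemma chiSqPDFReal_add_two_self_le {m : ℝ} (hm : 0 < m) :
    chiSqPDFReal (m + 2) m ≤ 1 / (2 * √(π * m)) := by
  have hstirling := le_Gamma_add_one_stirling (half_pos hm)
  rw [chiSqPDFReal_add_two_of_pos hm, div_le_div_iff₀ (by positivity) (by positivity), one_mul]
  calc m ^ (m / 2) * exp (-m / 2) * (2 * √(π * m))
      = 2 ^ (m / 2 + 1) * (√(2 * π * (m / 2)) * (m / 2 / exp 1) ^ (m / 2)) := by
        rw [div_rpow (by positivity) (exp_pos 1).le, exp_one_rpow, rpow_add_one two_ne_zero,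
          div_rpow hm.le zero_le_two, neg_div, exp_neg, show 2 * π * (m / 2) = π * m by ring]
        field_simp
    _ ≤ 2 ^ (m / 2 + 1) * Gamma (m / 2 + 1) := by gcongr

lemma lintegral_Ioi_chiSqPDFReal_add_two_le {m t : ℝ} (hm : 0 < m) (ht : 0 < t) :
    ∫⁻ x in Ioi (m + t), ENNReal.ofReal (chiSqPDFReal (m + 2) x) ≤
      ENNReal.ofReal
        ((1 + m / t) / √(π * m) * exp (-(t ^ 2 / (4 * m)) + t ^ 3 / (6 * m ^ 2))) := by
  have hrate : 1 / 2 - m / 2 / (m + t) = t / (2 * (m + t)) := by field_simp; ring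
  have hpdf : 0 ≤ chiSqPDFReal (m + 2) (m + t) := by
    rw [chiSqPDFReal_add_two_of_pos (by positivity)]
    have := Gamma_pos_of_pos (show 0 < m / 2 + 1 by positivity)
    positivity
  refine (lintegral_Ioi_le_of_le_mul_exp (r := t / (2 * (m + t))) hpdf (by positivity)
    fun x hx => ?_).trans (ENNReal.ofReal_le_ofReal ?_)
  · rw [← hrate]
    exact chiSqPDFReal_add_two_le_mul_exp hm.le (by positivity) (le_of_lt hx)
  calc chiSqPDFReal (m + 2) (m + t) / (t / (2 * (m + t)))
      ≤ chiSqPDFReal (m + 2) m * exp (-(t ^ 2 / (4 * m)) + t ^ 3 / (6 * m ^ 2)) /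
          (t / (2 * (m + t))) := by gcongr; exact chiSqPDFReal_add_two_add_le hm ht.le
    _ ≤ 1 / (2 * √(π * m)) * exp (-(t ^ 2 / (4 * m)) + t ^ 3 / (6 * m ^ 2)) /
          (t / (2 * (m + t))) := by gcongr; exact chiSqPDFReal_add_two_self_le hm
    _ = (1 + m / t) / √(π * m) * exp (-(t ^ 2 / (4 * m)) + t ^ 3 / (6 * m ^ 2)) := by
        field_simp
        ring

end ProbabilityTheory

open ProbabilityTheory

lemma tail_bound_at_sqrt_threshold_eq {m c L : ℝ} (hm : 0 < m) (hc : 0 < c) (hL : 0 < L) :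
    (1 + m / (2 * √(c * m * L))) / √(π * m) *
        exp (-((2 * √(c * m * L)) ^ 2 / (4 * m)) + (2 * √(c * m * L)) ^ 3 / (6 * m ^ 2)) =
      (1 / √(π * m) + 1 / (2 * √(c * π * L))) * exp (4 / 3 * √(c ^ 3 * L ^ 3 / m)) *
        exp (-(c * L)) := by
  set s := √(c * m * L)
  have hs : s ^ 2 = c * m * L := sq_sqrt (by positivity)
  have hcube : √(c ^ 3 * L ^ 3 / m) = c * L / m * s := by
    rw [show c ^ 3 * L ^ 3 / m = (c * L / m) ^ 2 * (c * m * L) by field_simp,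
      sqrt_mul (by positivity), sqrt_sq (by positivity)]
  have hcoef : s * √(π * m) = m * √(c * π * L) := by
    rw [← sqrt_mul (by positivity), show c * m * L * (π * m) = m ^ 2 * (c * π * L) by ring,
      sqrt_mul (sq_nonneg m), sqrt_sq hm.le]
  have hexp : -((2 * s) ^ 2 / (4 * m)) + (2 * s) ^ 3 / (6 * m ^ 2) =
      4 / 3 * (c * L / m * s) + -(c * L) := by
    rw [show (2 * s) ^ 3 = 8 * s ^ 2 * s by ring, mul_pow, hs]
    field_simp
    ring
  rw [hexp, hcube, exp_add, add_div, div_div, mul_assoc 2, hcoef]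
  field_simp

/-- Tail bound for the chi-squared distribution with `n > 2` degrees of freedom:
`P(x > n - 2 + 2√(c(n-2)ln n)) ≤ α n^{-c}`. The chi-squared distribution is given by
its density `x^{n/2-1} e^{-x/2} / (2^{n/2} Γ(n/2))` on `(0, ∞)`. -/
theorem chiSq_tail_bound (n : ℕ) (hn : 2 < n) (c : ℝ) (hc : 0 < c) :
    (volume.withDensity fun x : ℝ => ENNReal.ofReal
        (if 0 < x then
          x ^ ((n : ℝ) / 2 - 1) * Real.exp (-x / 2) /
            (2 ^ ((n : ℝ) / 2) * Real.Gamma ((n : ℝ) / 2))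
        else 0))
      {x : ℝ | (n : ℝ) - 2 + 2 * Real.sqrt (c * ((n : ℝ) - 2) * Real.log n) < x}
    ≤ ENNReal.ofReal
        ((1 / Real.sqrt (Real.pi * ((n : ℝ) - 2)) +
            1 / (2 * Real.sqrt (c * Real.pi * Real.log n))) *
          Real.exp (4 / 3 * Real.sqrt (c ^ 3 * Real.log n ^ 3 / ((n : ℝ) - 2))) *
          (n : ℝ) ^ (-c)) := by
  have hm : (0 : ℝ) < n - 2 := sub_pos.2 (by exact_mod_cast hn)
  have hL : 0 < log n := log_pos (by exact_mod_cast (by omega : 1 < n))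
  have htail := lintegral_Ioi_chiSqPDFReal_add_two_le hm
    (t := 2 * √(c * (n - 2) * log n)) (by positivity)
  rw [sub_add_cancel, tail_bound_at_sqrt_threshold_eq hm hc hL] at htail
  rw [rpow_def_of_pos (by positivity : (0 : ℝ) < n), mul_neg, mul_comm (log n) c]
  -- `chiSqPDFReal n` and `Ioi` unfold to the density and the set in the statement.
  exact (withDensity_apply _ measurableSet_Ioi).trans_le htail
end

section
/- For any integer n ≥ 1, n! ≥ sqrt(2πn) (n/e)^n. -/
/-- Stirling's lower bound: `n! ≥ √(2πn) (n/e)^n` for all `n ≥ 1`. -/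
theorem stirling_lower_bound (n : ℕ) (hn : 1 ≤ n) :
    Real.sqrt (2 * Real.pi * n) * ((n : ℝ) / Real.exp 1) ^ n ≤ (n.factorial : ℝ) := by
  have hanti := Stirling.stirlingSeq'_antitone
  have hlim : Filter.Tendsto (Stirling.stirlingSeq ∘ Nat.succ) Filter.atTop
      (nhds (Real.sqrt Real.pi)) :=
    Stirling.tendsto_stirlingSeq_sqrt_pi.comp (Filter.tendsto_add_atTop_nat 1)
  obtain ⟨m, rfl⟩ := Nat.exists_eq_add_of_le hn
  have h := hanti.le_of_tendsto hlim m
  simp only [Function.comp_apply, Nat.succ_eq_add_one] at h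
  rw [Stirling.stirlingSeq] at h
  rw [Nat.add_comm 1 m]
  set k : ℕ := m + 1
  have hk : (0:ℝ) < k := by positivity
  have hpos : (0:ℝ) < Real.sqrt (2 * k) * ((k : ℝ) / Real.exp 1) ^ k := by positivity
  rw [le_div_iff₀ hpos] at h
  calc Real.sqrt (2 * Real.pi * k) * ((k : ℝ) / Real.exp 1) ^ k
      = Real.sqrt Real.pi * (Real.sqrt (2 * k) * ((k : ℝ) / Real.exp 1) ^ k) := by
        rw [← mul_assoc, ← Real.sqrt_mul Real.pi_pos.le]
        ring_nf
    _ ≤ (Nat.factorial k : ℝ) := h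
end

section
/- Let A = σ u v* + E with σ > 0, ‖u‖₂ = ‖v‖₂ = 1, and let δ = ‖E‖_C (maximum absolute value of entries of E), ε = δ/(σ‖u‖_∞‖v‖_∞) ≤ 1/8, and μ₁ = (1 - sqrt(1-8ε))/2. Fix a column index j and set μ = |v_j|/‖v‖_∞. If a_{sj} is a maximal-in-modulus element of column j of A and μ₁ < μ < μ₂ = (1+sqrt(1-8ε))/2, then |u_s| > μ ‖u‖_∞. -/
/-!
Comparing the maximal entry `a_{sj}` with the entry of column `j` in a row where
`|u_i| = ‖u‖_∞` gives `σ (‖u‖_∞ - |u_s|) |v_j| ≤ 2δ`. If `|u_s| ≤ μ ‖u‖_∞`, this forces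
`μ - μ² ≤ 2ε`, whereas `μ₁ < μ < μ₂` says that `μ` lies strictly between the roots of
`μ² - μ + 2ε`.
-/

open ComplexConjugate

theorem two_mul_lt_sub_sq_of_between_roots {ε μ : ℝ}
    (h1 : (1 - Real.sqrt (1 - 8 * ε)) / 2 < μ) (h2 : μ < (1 + Real.sqrt (1 - 8 * ε)) / 2) :
    2 * ε < μ - μ ^ 2 := by
  have hroot : |2 * μ - 1| < Real.sqrt (1 - 8 * ε) := abs_sub_lt_iff.2 ⟨by linarith, by linarith⟩
  have hsq : (2 * μ - 1) ^ 2 < 1 - 8 * ε := by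
    simpa only [sq_abs] using (Real.lt_sqrt (abs_nonneg _)).1 hroot
  nlinarith

theorem ciSup_norm_pos {ι E : Type*} [Finite ι] [NormedAddCommGroup E] {u : ι → E} (hu : u ≠ 0) :
    0 < ⨆ i, ‖u i‖ := by
  obtain ⟨i, hi⟩ := Function.ne_iff.1 hu
  exact (norm_pos_iff.2 hi).trans_le (le_ciSup (Finite.bddAbove_range fun i => ‖u i‖) i)

theorem norm_mul_ciSup_norm_sub_le_of_max_entry {𝕜 ι : Type*} [NormedField 𝕜] [Finite ι]
    {a u e : ι → 𝕜} {c : 𝕜} {δ : ℝ} (ha : ∀ i, a i = c * u i + e i) (he : ∀ i, ‖e i‖ ≤ δ)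
    {s : ι} (hs : ∀ i, ‖a i‖ ≤ ‖a s‖) :
    ‖c‖ * ((⨆ i, ‖u i‖) - ‖u s‖) ≤ 2 * δ := by
  have : Nonempty ι := ⟨s⟩
  obtain ⟨i₀, hi₀⟩ := exists_eq_ciSup_of_finite (f := fun i => ‖u i‖)
  have hentry : ∀ i, |‖a i‖ - ‖c‖ * ‖u i‖| ≤ δ := fun i => by
    rw [← norm_mul]
    exact (abs_norm_sub_norm_le _ _).trans (by rw [ha i, add_sub_cancel_left]; exact he i)
  have h₀ := abs_le.1 (hentry i₀)
  have hs' := abs_le.1 (hentry s)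
  rw [← hi₀]
  linarith [hs i₀]

theorem good_column_max_in_good_row_general {m n : ℕ}
    (σ : ℝ) (hσ : 0 < σ)
    (u : Fin m → ℂ) (v : Fin n → ℂ)
    (hu : ∑ i, ‖u i‖ ^ 2 = 1)
    (A E : Matrix (Fin m) (Fin n) ℂ)
    (hA : ∀ i j, A i j = σ * u i * (starRingEnd ℂ) (v j) + E i j)
    (δ : ℝ) (hδ : δ = ⨆ p : Fin m × Fin n, ‖E p.1 p.2‖)
    (ε : ℝ)
    (hε : ε = δ / (σ * (⨆ i, ‖u i‖) * (⨆ j, ‖v j‖)))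
    (j : Fin n) (s : Fin m)
    (hmax : ∀ i, ‖A i j‖ ≤ ‖A s j‖)
    (μ : ℝ) (hμ : μ = ‖v j‖ / (⨆ j, ‖v j‖))
    (h1 : (1 - Real.sqrt (1 - 8 * ε)) / 2 < μ)
    (h2 : μ < (1 + Real.sqrt (1 - 8 * ε)) / 2) :
    μ * (⨆ i, ‖u i‖) < ‖u s‖ := by
  set U := ⨆ i, ‖u i‖
  set V := ⨆ j, ‖v j‖
  have hE : ∀ i, ‖E i j‖ ≤ δ := fun i =>
    hδ ▸ le_ciSup (Finite.bddAbove_range fun p : Fin m × Fin n => ‖E p.1 p.2‖) (i, j)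
  have hcol := norm_mul_ciSup_norm_sub_le_of_max_entry (a := fun i => A i j) (u := u)
    (c := σ * conj (v j)) (fun i => by rw [hA]; ring) hE hmax
  rw [norm_mul, Complex.norm_conj, Complex.norm_real, Real.norm_of_nonneg hσ.le] at hcol
  have hgap := two_mul_lt_sub_sq_of_between_roots h1 h2
  have hU : 0 < U := ciSup_norm_pos fun h => by simp [h] at hu
  have hε0 : 0 ≤ ε := hε ▸ div_nonneg ((norm_nonneg _).trans (hE s))
    (mul_nonneg (mul_nonneg hσ.le hU.le) (Real.iSup_nonneg fun _ => norm_nonneg _))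
  have hV : 0 < V := (Real.iSup_nonneg fun _ => norm_nonneg _).lt_of_ne' fun h : V = 0 => by
    rw [h, div_zero] at hμ
    nlinarith
  have hvj : ‖v j‖ = μ * V := by rw [hμ, div_mul_cancel₀ _ hV.ne']
  have hδε : δ = σ * U * V * ε := by rw [hε]; field_simp
  have hμ0 : 0 ≤ μ := hμ ▸ div_nonneg (norm_nonneg _) hV.le
  by_contra! hus
  have hle : σ * U * V * (μ - μ ^ 2) ≤ σ * U * V * (2 * ε) :=
    calc σ * U * V * (μ - μ ^ 2) = σ * (μ * V) * (U - μ * U) := by ring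
      _ ≤ σ * ‖v j‖ * (U - ‖u s‖) := by rw [hvj]; gcongr
      _ ≤ 2 * δ := hcol
      _ = σ * U * V * (2 * ε) := by rw [hδε]; ring
  linarith [le_of_mul_le_mul_left hle (by positivity)]

/-- If `A = σuv* + E`, `ε = ‖E‖_C/(σ‖u‖_∞‖v‖_∞) ≤ 1/8`, and `a_{sj}` is a
maximal-in-modulus element of column `j` with `μ₁ < μ := |v_j|/‖v‖_∞ < μ₂`,
then `|u_s| > μ‖u‖_∞`. -/
theorem good_column_max_in_good_row {m n : ℕ} [NeZero m] [NeZero n]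
    (σ : ℝ) (hσ : 0 < σ)
    (u : Fin m → ℂ) (v : Fin n → ℂ)
    (hu : ∑ i, ‖u i‖ ^ 2 = 1) (hv : ∑ j, ‖v j‖ ^ 2 = 1)
    (A E : Matrix (Fin m) (Fin n) ℂ)
    (hA : ∀ i j, A i j = σ * u i * (starRingEnd ℂ) (v j) + E i j)
    (δ : ℝ) (hδ : δ = ⨆ p : Fin m × Fin n, ‖E p.1 p.2‖)
    (ε : ℝ)
    (hε : ε = δ / (σ * (⨆ i, ‖u i‖) * (⨆ j, ‖v j‖)))
    (hε8 : ε ≤ 1 / 8)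
    (j : Fin n) (s : Fin m)
    (hmax : ∀ i, ‖A i j‖ ≤ ‖A s j‖)
    (μ : ℝ) (hμ : μ = ‖v j‖ / (⨆ j, ‖v j‖))
    (h1 : (1 - Real.sqrt (1 - 8 * ε)) / 2 < μ)
    (h2 : μ < (1 + Real.sqrt (1 - 8 * ε)) / 2) :
    μ * (⨆ i, ‖u i‖) < ‖u s‖ :=
  good_column_max_in_good_row_general σ hσ u v hu A E hA δ hδ ε hε j s hmax μ hμ h1 h2
end

section
/- Under the same rank-1-plus-noise setup (A = σuv* + E, ε = ‖E‖_C/(σ‖u‖_∞‖v‖_∞) ≤ 1/8, μ₁, μ₂ as before), if a_{sj} is maximal in modulus in column j and |v_j|/‖v‖_∞ ≥ μ₂, then |u_s| ≥ μ₂ ‖u‖_∞. -/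
/-!
Let `U = ‖u‖_∞` be attained at `i₀`. Comparing the entries `i₀` and `s` of column `j`, each of
which is `σ u_i v̄_j` up to an error of modulus at most `δ`, the maximality of `a_{sj}` gives
`σ |v_j| (U - |u_s|) ≤ 2δ = 2εσUV`. With `|v_j| ≥ μ₂ V` this becomes `μ₂ (U - |u_s|) ≤ 2εU`,
and since `2ε = μ₁μ₂ = μ₂(1 - μ₂)` it rearranges to `|u_s| ≥ μ₂ U`.
-/

/-- The larger root `μ₂` of `μ² - μ + 2ε`. -/
noncomputable def largeRoot (ε : ℝ) : ℝ := (1 + Real.sqrt (1 - 8 * ε)) / 2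

lemma largeRoot_pos (ε : ℝ) : 0 < largeRoot ε := by
  unfold largeRoot
  positivity

lemma largeRoot_mul_one_sub {ε : ℝ} (hε : ε ≤ 1 / 8) :
    largeRoot ε * (1 - largeRoot ε) = 2 * ε := by
  have hsq : Real.sqrt (1 - 8 * ε) ^ 2 = 1 - 8 * ε := Real.sq_sqrt (by linarith)
  unfold largeRoot
  linear_combination (-(1 / 4 : ℝ)) * hsq

lemma largeRoot_mul_le_of_mul_sub_le {ε U x : ℝ} (hε : ε ≤ 1 / 8)
    (h : largeRoot ε * (U - x) ≤ 2 * ε * U) : largeRoot ε * U ≤ x := by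
  rw [← largeRoot_mul_one_sub hε] at h
  have h' : largeRoot ε * (largeRoot ε * U) ≤ largeRoot ε * x := by linarith
  exact le_of_mul_le_mul_left h' (largeRoot_pos ε)

lemma largeRoot_mul_le_of_mul_sub_le_two_mul {ε σ U V w x : ℝ} (hε : ε ≤ 1 / 8) (hσ : 0 < σ)
    (hV : 0 < V) (hxU : x ≤ U) (hw : largeRoot ε * V ≤ w)
    (h : w * (σ * U - σ * x) ≤ 2 * (ε * (σ * U * V))) : largeRoot ε * U ≤ x := by
  apply largeRoot_mul_le_of_mul_sub_le hε
  have hσU : 0 ≤ σ * (U - x) := mul_nonneg hσ.le (sub_nonneg.mpr hxU)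
  have h' : (σ * V) * (largeRoot ε * (U - x)) ≤ (σ * V) * (2 * ε * U) := by
    nlinarith [mul_le_mul_of_nonneg_right hw hσU]
  exact le_of_mul_le_mul_left h' (by positivity)

lemma norm_mul_norm_sub_le_of_isMax_norm {ι 𝕜 : Type*} [NormedDivisionRing 𝕜]
    (x e : ι → 𝕜) (c : 𝕜) {δ : ℝ} (he : ∀ i, ‖e i‖ ≤ δ) {s : ι}
    (hmax : ∀ i, ‖x i * c + e i‖ ≤ ‖x s * c + e s‖) (i : ι) :
    ‖c‖ * (‖x i‖ - ‖x s‖) ≤ 2 * δ := by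
  have hlow : ‖x i‖ * ‖c‖ - δ ≤ ‖x i * c + e i‖ := by
    have := norm_sub_le (x i * c + e i) (e i)
    rw [add_sub_cancel_right, norm_mul] at this
    linarith [he i]
  have hup : ‖x s * c + e s‖ ≤ ‖x s‖ * ‖c‖ + δ := by
    have := norm_add_le (x s * c) (e s)
    rw [norm_mul] at this
    linarith [he s]
  linarith [hmax i]

theorem very_good_column_max_general {m n : ℕ}
    (σ : ℝ) (hσ : 0 < σ)
    (u : Fin m → ℂ) (v : Fin n → ℂ)
    (A E : Matrix (Fin m) (Fin n) ℂ)
    (hA : ∀ i j, A i j = σ * u i * (starRingEnd ℂ) (v j) + E i j)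
    (δ : ℝ) (hδ : δ = ⨆ p : Fin m × Fin n, ‖E p.1 p.2‖)
    (ε : ℝ)
    (hε : ε = δ / (σ * (⨆ i, ‖u i‖) * (⨆ j, ‖v j‖)))
    (hε8 : ε ≤ 1 / 8)
    (j : Fin n) (s : Fin m)
    (hmax : ∀ i, ‖A i j‖ ≤ ‖A s j‖)
    (hvj : (1 + Real.sqrt (1 - 8 * ε)) / 2 ≤
      ‖v j‖ / (⨆ j, ‖v j‖)) :
    (1 + Real.sqrt (1 - 8 * ε)) / 2 * (⨆ i, ‖u i‖) ≤ ‖u s‖ := by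
  change largeRoot ε ≤ _ at hvj
  change largeRoot ε * _ ≤ _
  have : Nonempty (Fin m) := ⟨s⟩
  obtain ⟨i₀, hi₀⟩ := exists_eq_ciSup_of_finite (f := fun i => ‖u i‖)
  set U := ⨆ i, ‖u i‖
  set V := ⨆ k, ‖v k‖
  have hU0 : 0 ≤ U := Real.iSup_nonneg fun i => norm_nonneg (u i)
  rcases hU0.eq_or_lt with hU | hU
  · rw [← hU, mul_zero]
    exact norm_nonneg _
  have hV : 0 < V := by
    by_contra! hV
    have : ‖v j‖ / V ≤ 0 := div_nonpos_of_nonneg_of_nonpos (norm_nonneg _) hV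
    linarith [largeRoot_pos ε]
  have hvjV : largeRoot ε * V ≤ ‖v j‖ := (le_div_iff₀ hV).mp hvj
  have hE : ∀ i, ‖E i j‖ ≤ δ := fun i =>
    hδ ▸ le_ciSup (f := fun p : Fin m × Fin n => ‖E p.1 p.2‖) (Finite.bddAbove_range _) (i, j)
  have hgap := norm_mul_norm_sub_le_of_isMax_norm (fun i => (σ : ℂ) * u i) (fun i => E i j)
    ((starRingEnd ℂ) (v j)) hE (s := s) (fun i => by simpa only [hA] using hmax i) i₀
  simp only [norm_mul, Complex.norm_conj, Complex.norm_real, Real.norm_of_nonneg hσ.le, hi₀]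
    at hgap
  have hδ' : δ = ε * (σ * U * V) := by
    rw [hε]
    field_simp
  refine largeRoot_mul_le_of_mul_sub_le_two_mul hε8 hσ hV ?_ hvjV (hδ' ▸ hgap)
  exact le_ciSup (f := fun i => ‖u i‖) (Finite.bddAbove_range _) s

/-- If `A = σuv* + E`, `ε = ‖E‖_C/(σ‖u‖_∞‖v‖_∞) ≤ 1/8`, and `a_{sj}` is a
maximal-in-modulus element of column `j` with `|v_j|/‖v‖_∞ ≥ μ₂`, then
`|u_s| ≥ μ₂‖u‖_∞`. -/
theorem very_good_column_max {m n : ℕ} [NeZero m] [NeZero n]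
    (σ : ℝ) (hσ : 0 < σ)
    (u : Fin m → ℂ) (v : Fin n → ℂ)
    (hu : ∑ i, ‖u i‖ ^ 2 = 1) (hv : ∑ j, ‖v j‖ ^ 2 = 1)
    (A E : Matrix (Fin m) (Fin n) ℂ)
    (hA : ∀ i j, A i j = σ * u i * (starRingEnd ℂ) (v j) + E i j)
    (δ : ℝ) (hδ : δ = ⨆ p : Fin m × Fin n, ‖E p.1 p.2‖)
    (ε : ℝ)
    (hε : ε = δ / (σ * (⨆ i, ‖u i‖) * (⨆ j, ‖v j‖)))
    (hε8 : ε ≤ 1 / 8)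
    (j : Fin n) (s : Fin m)
    (hmax : ∀ i, ‖A i j‖ ≤ ‖A s j‖)
    (hvj : (1 + Real.sqrt (1 - 8 * ε)) / 2 ≤
      ‖v j‖ / (⨆ j, ‖v j‖)) :
    (1 + Real.sqrt (1 - 8 * ε)) / 2 * (⨆ i, ‖u i‖) ≤ ‖u s‖ :=
  very_good_column_max_general σ hσ u v A E hA δ hδ ε hε hε8 j s hmax hvj
end

section
/- Let a, b, c, d be entries of a 2×2 submatrix of a matrix within entrywise distance δ of a rank-1 matrix σuv* (ε = δ/(σ‖u‖_∞‖v‖_∞)), where |a| ≥ σ‖u‖_∞‖v‖_∞(μ₂ − ε) with μ₂ = (1+sqrt(1-8ε))/2, ε ≤ 1/8, and |d| ≤ σ‖u‖_∞‖v‖_∞(1+ε). Then |d − b a^{-1} c| ≤ 4δ (1+ε)/(μ₂ − ε) = 8δ(1+ε)/(1 + sqrt(1-8ε) − 2ε). -/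
/-!
The rank-one parts cancel in the `2×2` minor `ad - bc`: every surviving term contains an entry
of `E`, so `|ad - bc| ≤ 4σ‖u‖_∞‖v‖_∞δ + 2δ²`. Since `d - ba⁻¹c = (ad - bc)/a`, the lower bound
on the pivot `|a|` gives the claim.
-/

theorem norm_le_iSup_norm {ι E : Type*} [Finite ι] [Norm E] (f : ι → E) (i : ι) :
    ‖f i‖ ≤ ⨆ i, ‖f i‖ :=
  le_ciSup (Finite.bddAbove_range fun i => ‖f i‖) i

theorem iSup_norm_pos {ι E : Type*} [Finite ι] [NormedAddCommGroup E] {f : ι → E}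
    (hf : f ≠ 0) : 0 < ⨆ i, ‖f i‖ := by
  obtain ⟨i, hi⟩ := Function.ne_iff.mp hf
  exact (norm_pos_iff.mpr hi).trans_le (norm_le_iSup_norm f i)

theorem norm_sub_mul_inv_mul_le {𝕜 : Type*} [NormedField 𝕜] {a b c d : 𝕜} {N r : ℝ}
    (hr : 0 < r) (ha : r ≤ ‖a‖) (hN : ‖a * d - b * c‖ ≤ N) :
    ‖d - b * a⁻¹ * c‖ ≤ N / r := by
  have ha0 : a ≠ 0 := norm_pos_iff.mp (hr.trans_le ha)
  have hschur : d - b * a⁻¹ * c = (a * d - b * c) / a := by field_simp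
  rw [hschur, norm_div]
  exact div_le_div₀ ((norm_nonneg _).trans hN) hN hr ha

theorem norm_minor_le_of_eq_mul_add {ι κ R : Type*} [NormedCommRing R]
    {A E : Matrix ι κ R} {x : ι → R} {y : κ → R} {X Y δ : ℝ}
    (hA : ∀ i j, A i j = x i * y j + E i j)
    (hx : ∀ i, ‖x i‖ ≤ X) (hy : ∀ j, ‖y j‖ ≤ Y) (hE : ∀ i j, ‖E i j‖ ≤ δ)
    (i k : ι) (j l : κ) :
    ‖A i j * A k l - A i l * A k j‖ ≤ 4 * (X * Y * δ) + 2 * δ ^ 2 := by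
  have hδ : 0 ≤ δ := (norm_nonneg _).trans (hE i j)
  have hX : 0 ≤ X := (norm_nonneg _).trans (hx i)
  have hY : 0 ≤ Y := (norm_nonneg _).trans (hy j)
  have hxyE : ∀ p q s t, ‖x p * y q * E s t‖ ≤ X * Y * δ := fun p q s t =>
    (norm_mul₃_le ..).trans <| by gcongr <;> first | positivity | apply_assumption
  have hEE : ∀ p q s t, ‖E p q * E s t‖ ≤ δ ^ 2 := fun p q s t =>
    (norm_mul_le ..).trans <| by rw [sq]; gcongr <;> first | positivity | apply_assumption
  have hexpand : A i j * A k l - A i l * A k j =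
      (x i * y j * E k l - x i * y l * E k j) + (x k * y l * E i j - x k * y j * E i l)
        + (E i j * E k l - E i l * E k j) := by
    rw [hA i j, hA k l, hA i l, hA k j]; ring
  rw [hexpand]
  refine (norm_add₃_le ..).trans ?_
  have h₁ := (norm_sub_le ..).trans (add_le_add (hxyE i j k l) (hxyE i l k j))
  have h₂ := (norm_sub_le ..).trans (add_le_add (hxyE k l i j) (hxyE k j i l))
  have h₃ := (norm_sub_le ..).trans (add_le_add (hEE i j k l) (hEE i l k j))
  linarith

theorem cross_pivot_error_bound_general {m n : ℕ}
    (σ : ℝ) (hσ : 0 < σ)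
    (u : Fin m → ℂ) (v : Fin n → ℂ)
    (hu : ∑ i, ‖u i‖ ^ 2 = 1) (hv : ∑ j, ‖v j‖ ^ 2 = 1)
    (A E : Matrix (Fin m) (Fin n) ℂ)
    (hA : ∀ i j, A i j = σ * u i * (starRingEnd ℂ) (v j) + E i j)
    (δ : ℝ) (hδE : ∀ i j, ‖E i j‖ ≤ δ)
    (ε : ℝ)
    (hε : ε = δ / (σ * (⨆ i, ‖u i‖) * (⨆ j, ‖v j‖)))
    (hε8 : ε ≤ 1 / 8)
    (i k : Fin m) (j l : Fin n)
    (ha : σ * (⨆ i, ‖u i‖) * (⨆ j, ‖v j‖) *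
        ((1 + Real.sqrt (1 - 8 * ε)) / 2 - ε) ≤ ‖A i j‖) :
    ‖A k l - A i l * (A i j)⁻¹ * A k j‖ ≤
      8 * δ * (1 + ε) / (1 + Real.sqrt (1 - 8 * ε) - 2 * ε) := by
  have hu0 : 0 < ⨆ i, ‖u i‖ := iSup_norm_pos <| by rintro rfl; simp at hu
  have hv0 : 0 < ⨆ j, ‖v j‖ := iSup_norm_pos <| by rintro rfl; simp at hv
  set M := σ * (⨆ i, ‖u i‖) * (⨆ j, ‖v j‖)
  set s := Real.sqrt (1 - 8 * ε)
  have hM : 0 < M := by positivity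
  have hμ : 0 < (1 + s) / 2 - ε := by linarith [Real.sqrt_nonneg (1 - 8 * ε)]
  have hδM : δ = ε * M := by rw [hε]; field_simp
  have hminor := norm_minor_le_of_eq_mul_add (x := fun i => (σ : ℂ) * u i)
    (y := fun j => starRingEnd ℂ (v j)) (X := σ * (⨆ i, ‖u i‖)) hA
    (fun i => by
      rw [norm_mul, Complex.norm_real, Real.norm_of_nonneg hσ.le]
      gcongr
      exact norm_le_iSup_norm u i)
    (fun j => by simpa using norm_le_iSup_norm v j) hδE i k j l
  calc ‖A k l - A i l * (A i j)⁻¹ * A k j‖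
      ≤ (4 * (M * δ) + 2 * δ ^ 2) / (M * ((1 + s) / 2 - ε)) :=
        norm_sub_mul_inv_mul_le (by positivity) ha hminor
    _ ≤ 4 * δ * (1 + ε) / ((1 + s) / 2 - ε) := by
        rw [div_le_div_iff₀ (by positivity) hμ]
        have hsq : 2 * δ ^ 2 ≤ 4 * (M * δ) * ε := by rw [hδM]; nlinarith [sq_nonneg (ε * M)]
        nlinarith [mul_le_mul_of_nonneg_right hsq hμ.le]
    _ = 8 * δ * (1 + ε) / (1 + s - 2 * ε) := by
        field_simp; ring

/-- Error of the rank-1 cross built on a large pivot: for a `2×2` submatrix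
`[[a,b],[c,d]]` of `A = σuv* + E` (entrywise `|E| ≤ δ`, `ε = δ/(σ‖u‖_∞‖v‖_∞) ≤ 1/8`),
with `|a| ≥ σ‖u‖_∞‖v‖_∞(μ₂ - ε)` and `|d| ≤ σ‖u‖_∞‖v‖_∞(1 + ε)`, one has
`|d - b a⁻¹ c| ≤ 4δ(1+ε)/(μ₂-ε) = 8δ(1+ε)/(1 + √(1-8ε) - 2ε)`. -/
theorem cross_pivot_error_bound {m n : ℕ} [NeZero m] [NeZero n]
    (σ : ℝ) (hσ : 0 < σ)
    (u : Fin m → ℂ) (v : Fin n → ℂ)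
    (hu : ∑ i, ‖u i‖ ^ 2 = 1) (hv : ∑ j, ‖v j‖ ^ 2 = 1)
    (A E : Matrix (Fin m) (Fin n) ℂ)
    (hA : ∀ i j, A i j = σ * u i * (starRingEnd ℂ) (v j) + E i j)
    (δ : ℝ) (hδE : ∀ i j, ‖E i j‖ ≤ δ)
    (ε : ℝ)
    (hε : ε = δ / (σ * (⨆ i, ‖u i‖) * (⨆ j, ‖v j‖)))
    (hε8 : ε ≤ 1 / 8)
    (i k : Fin m) (j l : Fin n)
    (ha : σ * (⨆ i, ‖u i‖) * (⨆ j, ‖v j‖) *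
        ((1 + Real.sqrt (1 - 8 * ε)) / 2 - ε) ≤ ‖A i j‖)
    (hd : ‖A k l‖ ≤
        σ * (⨆ i, ‖u i‖) * (⨆ j, ‖v j‖) * (1 + ε)) :
    ‖A k l - A i l * (A i j)⁻¹ * A k j‖ ≤
      8 * δ * (1 + ε) / (1 + Real.sqrt (1 - 8 * ε) - 2 * ε) :=
  cross_pivot_error_bound_general σ hσ u v hu hv A E hA δ hδE ε hε hε8 i k j l ha
end
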